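/- For Re(q) > 0, P_{0,q} acts on the image of B_q by multiplication by e^(-t): for any φ ∈ L¹((0,∞), t^(2q-1)e^(-t)dt) and x in the disk |x-1/2|<1/2, (x+1)^(-2q) B_q[φ](x/(x+1)) = B_q[e^(-t) φ(t)](x). -/

import Mathlib

open MeasureTheory

noncomputable def Bq (q : ℂ) (φ : ℝ → ℂ) (x : ℂ) : ℂ :=
  x ^ (-2 * q) * ∫ t in Set.Ioi (0:ℝ),
    Complex.exp (-(t:ℂ) / x) * Complex.exp (t:ℂ) * φ t * (t:ℂ) ^ (2 * q - 1) *
      Complex.exp (-(t:ℂ))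

/-! The identity is pointwise in `t`: since `x / (x + 1)` has reciprocal `1 / x + 1`, the kernel
`exp (-t / (x / (x + 1)))` splits as `exp (-t / x) * exp (-t)`, and the prefactors combine by
`(x + 1) ^ s * (x / (x + 1)) ^ s = x ^ s`, which holds for principal powers because `x + 1` and
`x / (x + 1)` both lie in the right half-plane, where `log` is additive. -/

namespace Complex

lemma log_mul_of_re_pos {x y : ℂ} (hx : 0 < x.re) (hy : 0 < y.re) :
    log (x * y) = log x + log y := by
  have hx' := abs_lt.mp (abs_arg_lt_pi_div_two_iff.mpr (Or.inl hx))
  have hy' := abs_lt.mp (abs_arg_lt_pi_div_two_iff.mpr (Or.inl hy))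
  refine log_mul (ne_zero_of_re_pos hx) (ne_zero_of_re_pos hy) ⟨?_, ?_⟩ <;>
    linarith [Real.pi_pos]

lemma mul_cpow_of_re_pos {x y : ℂ} (hx : 0 < x.re) (hy : 0 < y.re) (s : ℂ) :
    (x * y) ^ s = x ^ s * y ^ s := by
  have hxy : x * y ≠ 0 := mul_ne_zero (ne_zero_of_re_pos hx) (ne_zero_of_re_pos hy)
  rw [cpow_def_of_ne_zero hxy, cpow_def_of_ne_zero (ne_zero_of_re_pos hx),
    cpow_def_of_ne_zero (ne_zero_of_re_pos hy), log_mul_of_re_pos hx hy, add_mul, exp_add]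

lemma re_pos_of_norm_sub_half_lt_half {x : ℂ} (hx : ‖x - 1 / 2‖ < 1 / 2) : 0 < x.re := by
  have h : |x.re - 1 / 2| < 1 / 2 := by
    simpa using (abs_re_le_norm (x - 1 / 2)).trans_lt hx
  linarith [(abs_lt.mp h).1]

lemma re_div_add_one_pos {x : ℂ} (hx : 0 < x.re) : 0 < (x / (x + 1)).re := by
  have hx1 : x + 1 ≠ 0 := ne_zero_of_re_pos (by simp only [add_re, one_re]; linarith)
  rw [div_re, ← add_div]
  refine div_pos ?_ (normSq_pos.mpr hx1)
  simp only [add_re, add_im, one_re, one_im, add_zero]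
  nlinarith [sq_nonneg x.im]

lemma exp_neg_div_div_add_one (t : ℂ) {x : ℂ} (hx : x ≠ 0) :
    exp (-t / (x / (x + 1))) = exp (-t / x) * exp (-t) := by
  rw [← exp_add, div_div_eq_mul_div]
  congr 1
  field_simp
  ring

lemma add_one_cpow_mul_div_add_one_cpow {x : ℂ} (hx : 0 < x.re) (s : ℂ) :
    (x + 1) ^ s * (x / (x + 1)) ^ s = x ^ s := by
  have hx1 : 0 < (x + 1).re := by simp only [add_re, one_re]; linarith
  rw [← mul_cpow_of_re_pos hx1 (re_div_add_one_pos hx), mul_div_cancel₀ _ (ne_zero_of_re_pos hx1)]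

end Complex

theorem P0_acts_as_mult_exp_general (q : ℂ) (φ : ℝ → ℂ)
    (x : ℂ) (hx : ‖x - 1/2‖ < 1/2) :
    (x + 1) ^ (-2 * q) * Bq q φ (x / (x + 1))
      = Bq q (fun t => (Real.exp (-t) : ℂ) * φ t) x := by
  have hre : 0 < x.re := Complex.re_pos_of_norm_sub_half_lt_half hx
  have hintegrand : ∀ t : ℝ,
      Complex.exp (-(t:ℂ) / (x / (x + 1))) * Complex.exp (t:ℂ) * φ t *
          (t:ℂ) ^ (2 * q - 1) * Complex.exp (-(t:ℂ))
        = Complex.exp (-(t:ℂ) / x) * Complex.exp (t:ℂ) *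
            ((Real.exp (-t) : ℂ) * φ t) * (t:ℂ) ^ (2 * q - 1) * Complex.exp (-(t:ℂ)) := by
    intro t
    rw [Complex.exp_neg_div_div_add_one _ (Complex.ne_zero_of_re_pos hre), Complex.ofReal_exp,
      Complex.ofReal_neg]
    ring
  unfold Bq
  rw [funext hintegrand, ← mul_assoc, Complex.add_one_cpow_mul_div_add_one_cpow hre]

theorem P0_acts_as_mult_exp (q : ℂ) (hq : 0 < q.re) (φ : ℝ → ℂ)
    (hφ : IntegrableOn (fun t : ℝ => φ t * (t:ℂ) ^ (2 * q - 1) * (Real.exp (-t) : ℂ))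
      (Set.Ioi 0))
    (x : ℂ) (hx : ‖x - 1/2‖ < 1/2) :
    (x + 1) ^ (-2 * q) * Bq q φ (x / (x + 1))
      = Bq q (fun t => (Real.exp (-t) : ℂ) * φ t) x :=
  P0_acts_as_mult_exp_general q φ x hx
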